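/- arXiv:1209.5986 — 3 statements merged into one kernel-verified Lean document; each statement's English description precedes it below -/
import Mathlib

section
/- Let $\{(V_j,\omega_j)\}_{j=1}^n$ be a tight $p$-fusion frame in $\mathbb{R}^d$ with $k$-dimensional subspaces and $\sum_j \omega_j = 1$. Then for every integer $1 \le \ell \le p$, it is also a tight $\ell$-fusion frame with tight frame bound $A_\ell = \frac{(k/2)_\ell}{(d/2)_\ell}$, where $(a)_\ell = a(a+1)\cdots(a+\ell-1)$; i.e., $\sum_{j=1}^n \omega_j \|P_{V_j}(x)\|^{2\ell} = \frac{(k/2)_\ell}{(d/2)_\ell}\|x\|^{2\ell}$ for all $x \in \mathbb{R}^d$. -/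
/-!
Apply the Laplacian, written as the sum over an orthonormal basis `(eᵢ)` of the second
derivatives of `t ↦ f (x + t • eᵢ)` at `t = 0`, to the tightness identity at level `m + 1`.
For an orthogonal projection `P`, the function `‖P x‖²` has Laplacian `2 tr P` and squared
gradient `4 ‖P x‖²`, so `Δ ‖P x‖^(2(m+1)) = 2 (m+1) (tr P + 2m) ‖P x‖^(2m)`; the same holds for
`P = 1` with `tr P = d`. Hence tightness at level `m + 1` with bound `B` gives tightness at
level `m` with bound `B (d/2 + m) / (k/2 + m)`. Descending to level `0`, where the frame sum is
`∑ ωⱼ = 1`, determines `A_p`, and with it every `A_ℓ`.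
-/

open Matrix Finset

noncomputable section

/-- `P` is the orthogonal projection matrix onto a `k`-dimensional subspace of `ℝ^d`. -/
def IsProjOfDim (k d : ℕ) (P : Matrix (Fin d) (Fin d) ℝ) : Prop :=
  P.IsSymm ∧ P * P = P ∧ P.trace = (k : ℝ)

open Polynomial Module
open scoped RealInnerProductSpace

theorem eval_zero_derivative_derivative_quadratic_pow {R : Type*} [CommRing R] (a b c : R)
    (m : ℕ) :
    eval 0 (derivative (derivative ((C a + C b * X + C c * X ^ 2) ^ (m + 1)))) =
      (m + 1) * m * a ^ (m - 1) * b ^ 2 + 2 * (m + 1) * c * a ^ m := by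
  set q := C a + C b * X + C c * X ^ 2
  have hq : eval 0 q = a := by simp [q]
  have hq' : eval 0 (derivative q) = b := by simp [q]
  have hq'' : eval 0 (derivative (derivative q)) = c * 2 := by simp [q, one_add_one_eq_two]
  simp only [derivative_pow, derivative_mul, derivative_C, zero_mul, zero_add, eval_add,
    eval_mul, eval_C, eval_pow, hq, hq', hq'', Nat.cast_add, Nat.cast_one, Nat.add_sub_cancel]
  ring

section InnerProductSpace

variable {E F : Type*} [NormedAddCommGroup E] [InnerProductSpace ℝ E]
  [NormedAddCommGroup F] [InnerProductSpace ℝ F]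

def normSqAlongLine (T : E →ₗ[ℝ] F) (x u : E) : ℝ[X] :=
  C (‖T x‖ ^ 2) + C (2 * ⟪T x, T u⟫) * X + C (‖T u‖ ^ 2) * X ^ 2

theorem eval_normSqAlongLine (T : E →ₗ[ℝ] F) (x u : E) (t : ℝ) :
    eval t (normSqAlongLine T x u) = ‖T (x + t • u)‖ ^ 2 := by
  simp only [normSqAlongLine, eval_add, eval_mul, eval_C, eval_X, eval_pow, map_add, map_smul,
    norm_add_sq_real, real_inner_smul_right, norm_smul, mul_pow, Real.norm_eq_abs, sq_abs]
  ring

namespace LinearMap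

theorem isSymmetricProjection_one : (1 : E →ₗ[ℝ] E).IsSymmetricProjection :=
  ⟨IsIdempotentElem.one, IsSymmetric.one⟩

namespace IsSymmetricProjection

variable {T : E →ₗ[ℝ] E}

theorem inner_map_map (hT : T.IsSymmetricProjection) (x y : E) : ⟪T x, T y⟫ = ⟪T x, y⟫ := by
  rw [← hT.isSymmetric (T x) y, ← Module.End.mul_apply, hT.isIdempotentElem.eq]

theorem sum_norm_sq_map (hT : T.IsSymmetricProjection) {ι : Type*} [Fintype ι]
    (b : OrthonormalBasis ι ℝ E) :
    ∑ i, ‖T (b i)‖ ^ 2 = T.trace ℝ E := by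
  simp_rw [T.trace_eq_sum_inner b, ← real_inner_self_eq_norm_sq, hT.inner_map_map,
    real_inner_comm]

theorem sum_eval_zero_derivative_derivative_normSqAlongLine_pow
    (hT : T.IsSymmetricProjection) {ι : Type*} [Fintype ι] (b : OrthonormalBasis ι ℝ E)
    (x : E) (m : ℕ) :
    ∑ i, eval 0 (derivative (derivative (normSqAlongLine T x (b i) ^ (m + 1)))) =
      2 * (m + 1) * (T.trace ℝ E + 2 * m) * ‖T x‖ ^ (2 * m) := by
  have hgrad : ∑ i, (2 * ⟪T x, T (b i)⟫) ^ 2 = 4 * ‖T x‖ ^ 2 := by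
    simp_rw [mul_pow, hT.inner_map_map, ← mul_sum, b.sum_sq_inner_left]
    norm_num
  have hpow : (m : ℝ) * (‖T x‖ ^ 2) ^ (m - 1) * ‖T x‖ ^ 2 = m * (‖T x‖ ^ 2) ^ m := by
    cases m with
    | zero => simp
    | succ m => rw [Nat.add_sub_cancel, mul_assoc, ← pow_succ]
  simp_rw [normSqAlongLine, eval_zero_derivative_derivative_quadratic_pow, sum_add_distrib,
    ← mul_sum, ← sum_mul, ← mul_sum, hgrad, hT.sum_norm_sq_map b, ← pow_mul]
  linear_combination 4 * (m + 1) * hpow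

end IsSymmetricProjection

end LinearMap

def IsTightFusionFrame {ι : Type*} [Fintype ι] (ω : ι → ℝ) (P : ι → E →ₗ[ℝ] E) (ℓ : ℕ)
    (A : ℝ) : Prop :=
  ∀ x, ∑ j, ω j * ‖P j x‖ ^ (2 * ℓ) = A * ‖x‖ ^ (2 * ℓ)

def fusionTightBound (a b : ℝ) (ℓ : ℕ) : ℝ :=
  (∏ i ∈ range ℓ, (a / 2 + i)) / ∏ i ∈ range ℓ, (b / 2 + i)

theorem fusionTightBound_zero (a b : ℝ) : fusionTightBound a b 0 = 1 := by
  simp [fusionTightBound]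

theorem fusionTightBound_succ (a b : ℝ) (ℓ : ℕ) :
    fusionTightBound a b (ℓ + 1) = fusionTightBound a b ℓ * ((a / 2 + ℓ) / (b / 2 + ℓ)) := by
  simp only [fusionTightBound, prod_range_succ, mul_div_mul_comm]

theorem fusionTightBound_pos {a b : ℝ} (ha : 0 < a) (hb : 0 < b) (ℓ : ℕ) :
    0 < fusionTightBound a b ℓ :=
  div_pos (prod_pos fun i _ ↦ by positivity) (prod_pos fun i _ ↦ by positivity)

namespace IsTightFusionFrame

variable {ι : Type*} [Fintype ι] {ω : ι → ℝ} {P : ι → E →ₗ[ℝ] E} {k A B : ℝ} {m p ℓ : ℕ}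

theorem bound_eq_sum_of_zero (h : IsTightFusionFrame ω P 0 B) : B = ∑ j, ω j := by
  simpa using (h 0).symm

variable [FiniteDimensional ℝ E]

theorem mul_sum_of_succ (hP : ∀ j, (P j).IsSymmetricProjection)
    (htr : ∀ j, (P j).trace ℝ E = k) (h : IsTightFusionFrame ω P (m + 1) B) (x : E) :
    (k + 2 * m) * ∑ j, ω j * ‖P j x‖ ^ (2 * m) =
      B * (finrank ℝ E + 2 * m) * ‖x‖ ^ (2 * m) := by
  let b := stdOrthonormalBasis ℝ E
  have hpoly : ∀ i, ∑ j, ω j • normSqAlongLine (P j) x (b i) ^ (m + 1) =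
      B • normSqAlongLine 1 x (b i) ^ (m + 1) := fun i ↦ by
    refine Polynomial.funext fun t ↦ ?_
    simp only [eval_finsetSum, eval_smul, eval_pow, eval_normSqAlongLine, smul_eq_mul, ← pow_mul]
    exact h _
  have hlap := congr(∑ i, eval 0 (derivative (derivative $(hpoly i))))
  simp only [derivative_sum, derivative_smul, eval_finsetSum, eval_smul, smul_eq_mul] at hlap
  rw [sum_comm, ← mul_sum] at hlap
  simp only [← mul_sum, (hP _).sum_eval_zero_derivative_derivative_normSqAlongLine_pow,
    LinearMap.isSymmetricProjection_one.sum_eval_zero_derivative_derivative_normSqAlongLine_pow,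
    htr, LinearMap.trace_one] at hlap
  refine mul_left_cancel₀ (by positivity : (2 * (m + 1) : ℝ) ≠ 0) ?_
  calc 2 * (m + 1) * ((k + 2 * m) * ∑ j, ω j * ‖P j x‖ ^ (2 * m))
      = ∑ j, ω j * (2 * (m + 1) * (k + 2 * m) * ‖P j x‖ ^ (2 * m)) := by
        simp_rw [mul_sum]; exact sum_congr rfl fun _ _ ↦ by ring
    _ = _ := by rw [hlap, Module.End.one_apply]; ring

theorem of_succ (hP : ∀ j, (P j).IsSymmetricProjection) (htr : ∀ j, (P j).trace ℝ E = k)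
    (hk : 0 < k) (h : IsTightFusionFrame ω P (m + 1) B) :
    IsTightFusionFrame ω P m (B * ((finrank ℝ E / 2 + m) / (k / 2 + m))) := fun x ↦ by
  apply mul_left_cancel₀ (by positivity : k + 2 * m ≠ 0)
  rw [h.mul_sum_of_succ hP htr x]
  field_simp

variable [Nontrivial E]

theorem of_le (hP : ∀ j, (P j).IsSymmetricProjection) (htr : ∀ j, (P j).trace ℝ E = k)
    (hk : 0 < k) (h : IsTightFusionFrame ω P p A) (hℓ : ℓ ≤ p) :
    IsTightFusionFrame ω P ℓ
      (A / fusionTightBound k (finrank ℝ E) p * fusionTightBound k (finrank ℝ E) ℓ) := by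
  have hd : (0 : ℝ) < finrank ℝ E := mod_cast finrank_pos
  induction hℓ using Nat.decreasingInduction with
  | self => rwa [div_mul_cancel₀ _ (fusionTightBound_pos hk hd p).ne']
  | of_succ ℓ _ ih =>
    convert ih.of_succ hP htr hk using 1
    rw [fusionTightBound_succ]
    field_simp

theorem of_le_of_sum_eq_one (hP : ∀ j, (P j).IsSymmetricProjection)
    (htr : ∀ j, (P j).trace ℝ E = k) (hk : 0 < k) (hω : ∑ j, ω j = 1)
    (h : IsTightFusionFrame ω P p A) (hℓ : ℓ ≤ p) :
    IsTightFusionFrame ω P ℓ (fusionTightBound k (finrank ℝ E) ℓ) := by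
  have hA := (h.of_le hP htr hk (Nat.zero_le p)).bound_eq_sum_of_zero
  rw [fusionTightBound_zero, mul_one, hω] at hA
  simpa [hA] using h.of_le hP htr hk hℓ

end IsTightFusionFrame

end InnerProductSpace

theorem Matrix.trace_toEuclideanLin {d : ℕ} (M : Matrix (Fin d) (Fin d) ℝ) :
    (toEuclideanLin M).trace ℝ _ = M.trace := by
  rw [toEuclideanLin_eq_toLin_orthonormal,
    LinearMap.trace_eq_matrix_trace ℝ (EuclideanSpace.basisFun (Fin d) ℝ).toBasis,
    LinearMap.toMatrix_toLin]

theorem IsProjOfDim.isSymmetricProjection {k d : ℕ} {P : Matrix (Fin d) (Fin d) ℝ}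
    (h : IsProjOfDim k d P) : (toEuclideanLin P).IsSymmetricProjection where
  isIdempotentElem := by
    rw [IsIdempotentElem, Module.End.mul_eq_comp, ← toLpLin_mul, h.2.1]
  isSymmetric := isSymmetric_toEuclideanLin_iff.mpr (isHermitian_iff_isSymm.mpr h.1)

theorem tight_p_fusion_is_tight_ell_fusion_general (d k n p : ℕ) (hk : 1 ≤ k) (hkd : k ≤ d)
    (V : Fin n → Matrix (Fin d) (Fin d) ℝ)
    (hV : ∀ j, IsProjOfDim k d (V j)) (ω : Fin n → ℝ)
    (hsum : (∑ j, ω j) = 1) (Ap : ℝ)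
    (htight : ∀ x : EuclideanSpace ℝ (Fin d),
      ∑ j, ω j * ‖Matrix.toEuclideanLin (V j) x‖ ^ (2 * p) = Ap * ‖x‖ ^ (2 * p)) :
    ∀ ℓ : ℕ, 1 ≤ ℓ → ℓ ≤ p →
      ∀ x : EuclideanSpace ℝ (Fin d),
        ∑ j, ω j * ‖Matrix.toEuclideanLin (V j) x‖ ^ (2 * ℓ) =
          ((∏ i ∈ Finset.range ℓ, ((k : ℝ) / 2 + i)) /
              (∏ i ∈ Finset.range ℓ, ((d : ℝ) / 2 + i))) * ‖x‖ ^ (2 * ℓ) := by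
  intro ℓ _ hℓp
  have : NeZero d := ⟨by omega⟩
  have htr (j : Fin n) : (toEuclideanLin (V j)).trace ℝ _ = k :=
    (V j).trace_toEuclideanLin.trans (hV j).2.2
  have h := IsTightFusionFrame.of_le_of_sum_eq_one (fun j ↦ (hV j).isSymmetricProjection) htr
    (Nat.cast_pos.mpr hk) hsum htight hℓp
  rwa [finrank_euclideanSpace_fin] at h

/-- A tight `p`-fusion frame with weights summing to one is a tight `ℓ`-fusion frame for
every `1 ≤ ℓ ≤ p`, with tight bound `A_ℓ = (k/2)_ℓ / (d/2)_ℓ`. -/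
theorem tight_p_fusion_is_tight_ell_fusion (d k n p : ℕ) (hk : 1 ≤ k) (hkd : k ≤ d)
    (hp : 1 ≤ p) (V : Fin n → Matrix (Fin d) (Fin d) ℝ)
    (hV : ∀ j, IsProjOfDim k d (V j)) (ω : Fin n → ℝ) (hω : ∀ j, 0 < ω j)
    (hsum : (∑ j, ω j) = 1) (Ap : ℝ)
    (htight : ∀ x : EuclideanSpace ℝ (Fin d),
      ∑ j, ω j * ‖Matrix.toEuclideanLin (V j) x‖ ^ (2 * p) = Ap * ‖x‖ ^ (2 * p)) :
    ∀ ℓ : ℕ, 1 ≤ ℓ → ℓ ≤ p →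
      ∀ x : EuclideanSpace ℝ (Fin d),
        ∑ j, ω j * ‖Matrix.toEuclideanLin (V j) x‖ ^ (2 * ℓ) =
          ((∏ i ∈ Finset.range ℓ, ((k : ℝ) / 2 + i)) /
              (∏ i ∈ Finset.range ℓ, ((d : ℝ) / 2 + i))) * ‖x‖ ^ (2 * ℓ) :=
  tight_p_fusion_is_tight_ell_fusion_general d k n p hk hkd V hV ω hsum Ap htight
end
end

section
/- Fix a positive integer $p$, complex numbers $b_1,\dots,b_p$, and positive real weights $\omega_1,\dots,\omega_p$. Define $f_\ell(T_1,\dots,T_p) = \sum_{j=1}^p \omega_j T_j^\ell - b_\ell$ for $\ell = 1,\dots,p$. Then the affine variety $\mathcal{V} = \{T \in \mathbb{C}^p : f_1(T) = \cdots = f_p(T) = 0\}$ is finite. -/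
/-!
The leading forms `∑ⱼ ωⱼ Tⱼ^ℓ` of the equations have no common zero but `T = 0`: otherwise, for a
polynomial `Q` of degree `≤ p` with `Q(0) = 0` vanishing at every value of `T` but one nonzero
value `z₀`, the equations give `0 = ∑ⱼ ωⱼ Q(Tⱼ) = (∑_{Tⱼ = z₀} ωⱼ) Q(z₀)`, and the weight sum is
positive. By the Nullstellensatz each `X_i^N` then lies in the ideal of the leading forms, and
taking degree-`N` components turns this into a relation `X_i^N ≡ r_i` of lower degree modulo the
ideal of the actual equations. Hence the coordinate ring of the variety is spanned by monomials of
bounded degree, so it is finite dimensional and has finitely many `ℂ`-points.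
-/

open Finset

theorem Polynomial.sum_mul_eval_eq_sum_range_coeff_mul {ι R : Type*} [CommSemiring R]
    (s : Finset ι) (w x : ι → R) {Q : Polynomial R} {n : ℕ} (hQ : Q.natDegree < n) :
    ∑ j ∈ s, w j * Q.eval (x j) = ∑ ℓ ∈ range n, Q.coeff ℓ * ∑ j ∈ s, w j * x j ^ ℓ := by
  simp_rw [Polynomial.eval_eq_sum_range' hQ, mul_sum]
  rw [sum_comm]
  exact sum_congr rfl fun _ _ => sum_congr rfl fun _ _ => by ring

open Polynomial in
theorem eq_zero_of_forall_sum_ofReal_mul_pow_eq_zero {ι : Type*} [Fintype ι] {ω : ι → ℝ}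
    (hω : ∀ j, 0 < ω j) {T : ι → ℂ}
    (hT : ∀ ℓ, 1 ≤ ℓ → ℓ ≤ Fintype.card ι → ∑ j, (ω j : ℂ) * T j ^ ℓ = 0) : T = 0 := by
  classical
  by_contra hT₀
  obtain ⟨j₀, hj₀⟩ : ∃ j, T j ≠ 0 := by simpa [funext_iff] using hT₀
  set s := (insert 0 (univ.image T)).erase (T j₀)
  set Q : ℂ[X] := ∏ z ∈ s, (X - C z)
  have hQ_eval (z : ℂ) : Q.eval z = 0 ↔ z ∈ s := by
    simp [Q, eval_prod, prod_eq_zero_iff, sub_eq_zero]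
  have hQ_deg : Q.natDegree < Fintype.card ι + 1 := by
    have hs : s.card ≤ Fintype.card ι :=
      calc s.card = (insert 0 (univ.image T)).card - 1 := card_erase_of_mem (by simp)
        _ ≤ (univ.image T).card := by have := card_insert_le 0 (univ.image T); omega
        _ ≤ Fintype.card ι := card_image_le.trans_eq card_univ
    rw [natDegree_prod_of_monic _ _ fun z _ => monic_X_sub_C z]
    simpa using hs
  have hsum : ∑ j, (ω j : ℂ) * Q.eval (T j) = 0 := by
    rw [sum_mul_eval_eq_sum_range_coeff_mul _ _ _ hQ_deg, sum_range_succ']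
    have hQ₀ : Q.coeff 0 = 0 := by
      rw [coeff_zero_eq_eval_zero, hQ_eval]
      simpa [s] using hj₀.symm
    rw [hQ₀, zero_mul, add_zero]
    exact sum_eq_zero fun ℓ hℓ => by
      rw [hT (ℓ + 1) le_add_self (mem_range.mp hℓ), mul_zero]
  have hsplit : ∑ j, (ω j : ℂ) * Q.eval (T j)
      = ((∑ j with T j = T j₀, ω j : ℝ) : ℂ) * Q.eval (T j₀) := by
    rw [Complex.ofReal_sum, sum_filter, sum_mul]
    refine sum_congr rfl fun j _ => ?_
    split_ifs with h
    · rw [h]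
    · rw [(hQ_eval _).mpr (by simp [s, h]), mul_zero, zero_mul]
  have hweight : 0 < ∑ j with T j = T j₀, ω j :=
    sum_pos (fun j _ => hω j) ⟨j₀, by simp⟩
  have hQ_j₀ : Q.eval (T j₀) ≠ 0 := by simp [hQ_eval, s]
  exact mul_ne_zero (by exact_mod_cast hweight.ne') hQ_j₀ (hsplit ▸ hsum)

namespace MvPolynomial

section CommSemiring

variable {σ R : Type*} [CommSemiring R]

noncomputable def weightedPowerSum [Fintype σ] (ω : σ → R) (ℓ : ℕ) : MvPolynomial σ R :=
  ∑ j, C (ω j) * X j ^ ℓ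

theorem isHomogeneous_weightedPowerSum [Fintype σ] (ω : σ → R) (ℓ : ℕ) :
    (weightedPowerSum ω ℓ).IsHomogeneous ℓ :=
  IsHomogeneous.sum _ _ _ fun _ _ => isHomogeneous_C_mul_X_pow _ _ _

@[simp]
theorem eval_weightedPowerSum [Fintype σ] (x ω : σ → R) (ℓ : ℕ) :
    eval x (weightedPowerSum ω ℓ) = ∑ j, ω j * x j ^ ℓ := by
  simp [weightedPowerSum]

attribute [local instance] gradedAlgebra in
theorem homogeneousComponent_mul_of_isHomogeneous (φ : MvPolynomial σ R)
    {ψ : MvPolynomial σ R} {d n : ℕ} (hψ : ψ.IsHomogeneous d) (hdn : d ≤ n) :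
    homogeneousComponent n (φ * ψ) = homogeneousComponent (n - d) φ * ψ := by
  classical
  simpa [← decomposition.decompose'_apply] using
    DirectSum.coe_decompose_mul_of_right_mem_of_le (homogeneousSubmodule σ R) (a := φ) hψ hdn

end CommSemiring

section CommRing

variable {σ R : Type*} [CommRing R]

theorem exists_totalDegree_lt_sub_mem_span_of_mem_span {ι : Type*} [Fintype ι]
    {g f : ι → MvPolynomial σ R} {d : ι → ℕ} (hg : ∀ ℓ, (g ℓ).IsHomogeneous (d ℓ))
    (hgf : ∀ ℓ, (g ℓ - f ℓ).totalDegree < d ℓ) {q : MvPolynomial σ R} {n : ℕ}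
    (hq : q.IsHomogeneous n) (hn : 0 < n) (hdn : ∀ ℓ, d ℓ ≤ n)
    (hqg : q ∈ Ideal.span (Set.range g)) :
    ∃ r : MvPolynomial σ R, r.totalDegree < n ∧ q - r ∈ Ideal.span (Set.range f) := by
  obtain ⟨c, hc⟩ := Ideal.mem_span_range_iff_exists_fun.mp hqg
  set c' := fun ℓ => homogeneousComponent (n - d ℓ) (c ℓ)
  have hq_eq : q = ∑ ℓ, c' ℓ * g ℓ := by
    rw [← homogeneousComponent_eq_self hq, ← hc, map_sum]
    exact sum_congr rfl fun ℓ _ => homogeneousComponent_mul_of_isHomogeneous _ (hg ℓ) (hdn ℓ)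
  refine ⟨∑ ℓ, c' ℓ * (g ℓ - f ℓ), ?_, ?_⟩
  · refine (totalDegree_finsetSum _ _).trans_lt ((Finset.sup_lt_iff hn).mpr fun ℓ _ => ?_)
    have hc' : (c' ℓ).totalDegree ≤ n - d ℓ :=
      (homogeneousComponent_isHomogeneous _ _).totalDegree_le
    have := totalDegree_mul (c' ℓ) (g ℓ - f ℓ)
    have := hgf ℓ
    have := hdn ℓ
    omega
  · have : q - ∑ ℓ, c' ℓ * (g ℓ - f ℓ) = ∑ ℓ, c' ℓ * f ℓ := by
      rw [hq_eq, ← sum_sub_distrib]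
      exact sum_congr rfl fun ℓ _ => by ring
    rw [this]
    exact Ideal.sum_mem _ fun ℓ _ => Ideal.mul_mem_left _ _ (Ideal.subset_span ⟨ℓ, rfl⟩)

variable [Fintype σ] {I : Ideal (MvPolynomial σ R)} {N : σ → ℕ}

theorem restrictTotalDegree_sup_restrictScalars_eq_top
    (hN : ∀ i, ∃ r : MvPolynomial σ R, r.totalDegree < N i ∧ X i ^ N i - r ∈ I) :
    restrictTotalDegree σ R (∑ i, N i) ⊔ I.restrictScalars R = ⊤ := by
  set M := restrictTotalDegree σ R (∑ i, N i) ⊔ I.restrictScalars R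
  suffices h : ∀ d, restrictTotalDegree σ R d ≤ M from
    eq_top_iff.mpr fun q _ => h q.totalDegree ((mem_restrictTotalDegree _ _ _).mpr le_rfl)
  have hmem {q : MvPolynomial σ R} (hq : q.totalDegree ≤ ∑ i, N i) : q ∈ M :=
    Submodule.mem_sup_left ((mem_restrictTotalDegree _ _ _).mpr hq)
  intro d
  induction d with
  | zero => exact fun q hq => hmem (((mem_restrictTotalDegree _ _ _).mp hq).trans (Nat.zero_le _))
  | succ d ih =>
    rw [restrictTotalDegree, restrictSupport_eq_span, Submodule.span_le]
    rintro _ ⟨s, hs : s.degree ≤ d + 1, rfl⟩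
    change monomial s (1 : R) ∈ M
    have hs_deg := totalDegree_monomial_le s (1 : R)
    by_cases hsD : s.degree ≤ ∑ i, N i
    · exact hmem (hs_deg.trans hsD)
    by_cases hsd : s.degree ≤ d
    · exact ih ((mem_restrictTotalDegree _ _ _).mpr (hs_deg.trans hsd))
    -- Reduce `s` along a variable `X i` whose exponent reaches `N i`.
    obtain ⟨i, hi⟩ : ∃ i, N i ≤ s i := by
      by_contra! h
      exact hsD (s.degree_eq_sum ▸ sum_le_sum fun i _ => (h i).le)
    obtain ⟨r, hr, hrI⟩ := hN i
    set t := s - Finsupp.single i (N i)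
    have hts : t + Finsupp.single i (N i) = s :=
      tsub_add_cancel_of_le (Finsupp.single_le_iff.mpr hi)
    have hdeg : t.degree + N i = s.degree := by
      rw [← hts, map_add, Finsupp.degree_single]
    have hsplit : monomial s (1 : R) = monomial t 1 * (X i ^ N i - r) + monomial t 1 * r := by
      rw [← mul_add, sub_add_cancel, X_pow_eq_monomial, monomial_mul, hts, one_mul]
    rw [hsplit]
    refine M.add_mem (Submodule.mem_sup_right (I.mul_mem_left _ hrI)) (ih ?_)
    rw [mem_restrictTotalDegree]
    have := totalDegree_mul (monomial t (1 : R)) r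
    have : (monomial t (1 : R)).totalDegree ≤ t.degree := totalDegree_monomial_le t 1
    omega

theorem finite_quotient_of_forall_X_pow_sub_mem
    (hN : ∀ i, ∃ r : MvPolynomial σ R, r.totalDegree < N i ∧ X i ^ N i - r ∈ I) :
    Module.Finite R (MvPolynomial σ R ⧸ I) := by
  refine Module.Finite.of_surjective
    ((Ideal.Quotient.mkₐ R I).toLinearMap ∘ₗ (restrictTotalDegree σ R (∑ i, N i)).subtype) ?_
  intro x
  obtain ⟨q, rfl⟩ := Ideal.Quotient.mk_surjective x
  obtain ⟨w, hw, y, hy, rfl⟩ := Submodule.mem_sup.mp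
    (restrictTotalDegree_sup_restrictScalars_eq_top hN ▸ Submodule.mem_top : q ∈ _)
  exact ⟨⟨w, hw⟩, by simp [Ideal.Quotient.eq_zero_iff_mem.mpr hy]⟩

end CommRing

section Field

variable {σ k K : Type*} [Field k] [Field K] [Algebra k K]

theorem zeroLocus_finite_of_finite_quotient {I : Ideal (MvPolynomial σ k)}
    [Module.Finite k (MvPolynomial σ k ⧸ I)] : (zeroLocus K I).Finite := by
  refine Set.finite_coe_iff.mp <| Finite.of_injective
    (fun x : zeroLocus K I => Ideal.Quotient.liftₐ I (aeval x.1) fun p hp => x.2 p hp)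
    fun x y hxy => ?_
  ext i
  simpa [Ideal.Quotient.liftₐ_comp] using congr(($hxy).comp (Ideal.Quotient.mkₐ k I) (X i))

theorem exists_X_pow_mem_of_zeroLocus_subset_zero [IsAlgClosed k] [Finite σ]
    {J : Ideal (MvPolynomial σ k)} (hJ : zeroLocus k J ⊆ {0}) (i : σ) :
    ∃ m, X i ^ m ∈ J := by
  rw [← Ideal.mem_radical_iff, ← vanishingIdeal_zeroLocus_eq_radical (K := k)]
  intro x hx
  obtain rfl := hJ hx
  simp

end Field

theorem exists_X_pow_mem_span_weightedPowerSum {p : ℕ} {ω : Fin p → ℝ} (hω : ∀ j, 0 < ω j)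
    (i : Fin p) : ∃ m, X i ^ m ∈
      Ideal.span (Set.range fun ℓ : Fin p => weightedPowerSum (fun j => (ω j : ℂ)) (ℓ + 1)) := by
  refine exists_X_pow_mem_of_zeroLocus_subset_zero (fun T hT => ?_) i
  rw [zeroLocus_span] at hT
  refine eq_zero_of_forall_sum_ofReal_mul_pow_eq_zero hω fun ℓ h₁ h₂ => ?_
  obtain ⟨ℓ, rfl⟩ := Nat.exists_eq_add_of_le' h₁
  simpa using hT _ ⟨⟨ℓ, by simp at h₂; omega⟩, rfl⟩

end MvPolynomial

open MvPolynomial in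
theorem weighted_power_sum_variety_finite_general (p : ℕ)
    (b : Fin p → ℂ) (ω : Fin p → ℝ) (hω : ∀ j, 0 < ω j) :
    {T : Fin p → ℂ |
        ∀ ℓ : Fin p, ∑ j, (ω j : ℂ) * T j ^ ((ℓ : ℕ) + 1) = b ℓ}.Finite := by
  set g : Fin p → MvPolynomial (Fin p) ℂ :=
    fun ℓ => weightedPowerSum (fun j => (ω j : ℂ)) (ℓ + 1)
  have hV : {T : Fin p → ℂ | ∀ ℓ : Fin p, ∑ j, (ω j : ℂ) * T j ^ ((ℓ : ℕ) + 1) = b ℓ}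
      = zeroLocus ℂ (Ideal.span (Set.range fun ℓ => g ℓ - C (b ℓ))) := by
    ext T
    simp [zeroLocus_span, g, sub_eq_zero]
  choose m hm using exists_X_pow_mem_span_weightedPowerSum hω
  -- Raising the exponent to `m i + p + 1` makes it exceed the degree of every `g ℓ`.
  have hred (i : Fin p) : ∃ r : MvPolynomial (Fin p) ℂ, r.totalDegree < m i + p + 1 ∧
      X i ^ (m i + p + 1) - r ∈ Ideal.span (Set.range fun ℓ => g ℓ - C (b ℓ)) := by
    refine exists_totalDegree_lt_sub_mem_span_of_mem_span (g := g) (d := fun ℓ => ℓ + 1)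
      (fun ℓ => isHomogeneous_weightedPowerSum _ _) (fun ℓ => by simp) (isHomogeneous_X_pow _ _)
      (by omega) (fun ℓ => by omega) ?_
    rw [add_assoc, pow_add]
    exact Ideal.mul_mem_right _ _ (hm i)
  have := finite_quotient_of_forall_X_pow_sub_mem hred
  rw [hV]
  exact zeroLocus_finite_of_finite_quotient

/-- The affine variety cut out by the weighted power-sum equations
`∑ⱼ ωⱼ Tⱼ^ℓ = b_ℓ`, `ℓ = 1,…,p`, with positive real weights, is finite. -/
theorem weighted_power_sum_variety_finite (p : ℕ) (hp : 1 ≤ p)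
    (b : Fin p → ℂ) (ω : Fin p → ℝ) (hω : ∀ j, 0 < ω j) :
    {T : Fin p → ℂ |
        ∀ ℓ : Fin p, ∑ j, (ω j : ℂ) * T j ^ ((ℓ : ℕ) + 1) = b ℓ}.Finite :=
  weighted_power_sum_variety_finite_general p b ω hω
end

section
/- For all positive integers $k \le d$ and all integers $p \ge 1$, the inequality $\big(\frac{d}{k}\big)^p \frac{(k/2)_p}{(d/2)_p} \le p^p$ holds, where $(a)_p = a(a+1)\cdots(a+p-1)$. -/
/-!
Each factor of the product `(d/k)^p (k/2)_p / (d/2)_p` satisfies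
`(d/k) (k/2 + i) / (d/2 + i) ≤ (k/2 + i) / (k/2) ≤ 1 + 2i`, so the whole product is at most
`1 · 3 ⋯ (2p - 1)`. Pairing the `i`-th odd number with the `(p - 1 - i)`-th one gives
`(1 + 2i)(2p - 1 - 2i) = p² - (p - 1 - 2i)² ≤ p²`, hence `(1 · 3 ⋯ (2p - 1))² ≤ p^(2p)`.
-/

open Finset

lemma div_mul_add_div_add_le {a b x : ℝ} (ha : 0 < a) (hb : 0 ≤ b) (hx : 0 ≤ x) :
    b / a * ((a + x) / (b + x)) ≤ 1 + x / a :=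
  calc b / a * ((a + x) / (b + x)) = b / (b + x) * ((a + x) / a) := by ring
    _ ≤ 1 * ((a + x) / a) := by gcongr; exact div_le_one_of_le₀ (by linarith) (by linarith)
    _ = 1 + x / a := by field_simp

lemma div_mul_half_add_div_half_add_le {k d x : ℝ} (hk : 1 ≤ k) (hd : 0 ≤ d) (hx : 0 ≤ x) :
    d / k * ((k / 2 + x) / (d / 2 + x)) ≤ 1 + 2 * x := by
  have hk' : 0 < k / 2 := by linarith
  calc d / k * ((k / 2 + x) / (d / 2 + x))
      = d / 2 / (k / 2) * ((k / 2 + x) / (d / 2 + x)) := by field_simp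
    _ ≤ 1 + x / (k / 2) := div_mul_add_div_add_le hk' (by positivity) hx
    _ = 1 + 2 * x / k := by field_simp
    _ ≤ 1 + 2 * x := by gcongr; exact div_le_self (by positivity) hk

lemma one_add_two_mul_mul_reflect_le_sq {p i : ℕ} (hi : i < p) :
    (1 + 2 * (i : ℝ)) * (1 + 2 * ((p - 1 - i : ℕ) : ℝ)) ≤ (p : ℝ) ^ 2 := by
  rw [Nat.cast_sub (by omega), Nat.cast_sub (by omega), Nat.cast_one]
  nlinarith [sq_nonneg ((p : ℝ) - 1 - 2 * i)]

lemma prod_range_one_add_two_mul_le_pow_self (p : ℕ) :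
    ∏ i ∈ range p, (1 + 2 * (i : ℝ)) ≤ (p : ℝ) ^ p := by
  have hsq : (∏ i ∈ range p, (1 + 2 * (i : ℝ))) ^ 2 ≤ ((p : ℝ) ^ p) ^ 2 :=
    calc (∏ i ∈ range p, (1 + 2 * (i : ℝ))) ^ 2
        = ∏ i ∈ range p, (1 + 2 * (i : ℝ)) * (1 + 2 * ((p - 1 - i : ℕ) : ℝ)) := by
          rw [sq, prod_mul_distrib, prod_range_reflect (fun i : ℕ ↦ 1 + 2 * (i : ℝ)) p]
      _ ≤ ∏ _i ∈ range p, (p : ℝ) ^ 2 :=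
          prod_le_prod (fun i _ ↦ by positivity)
            (fun i hi ↦ one_add_two_mul_mul_reflect_le_sq (mem_range.mp hi))
      _ = ((p : ℝ) ^ p) ^ 2 := by rw [prod_const, card_range, ← pow_mul, ← pow_mul, mul_comm]
  exact (pow_le_pow_iff_left₀ (by positivity) (by positivity) two_ne_zero).mp hsq

theorem pochhammer_ratio_le_general (k d p : ℕ) (hk : 1 ≤ k) :
    ((d : ℝ) / k) ^ p *
        ((∏ i ∈ Finset.range p, ((k : ℝ) / 2 + i)) /
          (∏ i ∈ Finset.range p, ((d : ℝ) / 2 + i))) ≤ (p : ℝ) ^ p :=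
  calc ((d : ℝ) / k) ^ p *
        ((∏ i ∈ range p, ((k : ℝ) / 2 + i)) / (∏ i ∈ range p, ((d : ℝ) / 2 + i)))
      = ∏ i ∈ range p, ((d : ℝ) / k * (((k : ℝ) / 2 + i) / ((d : ℝ) / 2 + i))) := by
        rw [prod_mul_distrib, prod_const, card_range, prod_div_distrib]
    _ ≤ ∏ i ∈ range p, (1 + 2 * (i : ℝ)) :=
        prod_le_prod (fun i _ ↦ by positivity)
          (fun i _ ↦ div_mul_half_add_div_half_add_le (by exact_mod_cast hk) (by positivity)
            (by positivity))
    _ ≤ (p : ℝ) ^ p := prod_range_one_add_two_mul_le_pow_self p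

/-- The arithmetic inequality `(d/k)^p (k/2)_p / (d/2)_p ≤ p^p` for `1 ≤ k ≤ d`, `p ≥ 1`. -/
theorem pochhammer_ratio_le (k d p : ℕ) (hk : 1 ≤ k) (hkd : k ≤ d) (hp : 1 ≤ p) :
    ((d : ℝ) / k) ^ p *
        ((∏ i ∈ Finset.range p, ((k : ℝ) / 2 + i)) /
          (∏ i ∈ Finset.range p, ((d : ℝ) / 2 + i))) ≤ (p : ℝ) ^ p :=
  pochhammer_ratio_le_general k d p hk
end
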